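/- Fix positive integers k, W, T, U with W ≤ T and reals ε, δ, α ≥ 0, β ∈ [0,1]. If there exists an (ε·W/(2T), δ·W/(2T))-DP algorithm (under item-level neighbors) for fixed-window freq≥k with window W in the bundle setting on datasets with time horizon 2W over universe [U] having (α,β)-utility, then there exists an (ε,δ)-DP algorithm (under item-level neighbors) for fixed-window freq≥k with window W in the bundle setting on datasets with time horizon T over universe [U] having (α,β)-utility. -/

import Mathlib

/-!
Cover the horizon `[1, T]` by `m = (T - W) / W + 1` blocks of length `2W` starting at times
`0, W, 2W, …`: the window starting at `i` lies in block `i / W`, at offset `i % W`. Run the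
horizon-`2W` mechanism independently on every block and answer each window from its block.
Utility is inherited query by query. An item-level change of the input is an item-level change
of every block, and `m W ≤ T`, so basic composition of approximate DP bounds the privacy loss
by `(m ε W / 2T, m δ W / 2T) ≤ (ε, δ)`. Composition needs the defining set bound
`p(S) ≤ c q(S) + d` to extend to `[0, 1]`-valued functions, which is the layer-cake formula.
-/

open Finset

/-- `(ε, δ)`-differential privacy of a randomized algorithm `M`
with respect to the neighboring relation `neighbor`. -/
def IsDP {I O : Type} (neighbor : I → I → Prop) (M : I → PMF O) (ε δ : ℝ) : Prop :=
  ∀ D D', neighbor D D' → ∀ s : Set O,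
    (M D).toOuterMeasure s ≤
      ENNReal.ofReal (Real.exp ε) * (M D').toOuterMeasure s + ENNReal.ofReal δ

/-- `(α, β)`-utility: for every input and every query, with probability at least
`1 - β` the output estimate is within `α` of the true value. -/
def HasUtility {I Q : Type} (M : I → PMF (Q → ℝ)) (val : I → Q → ℝ) (α β : ℝ) : Prop :=
  ∀ D q, ENNReal.ofReal (1 - β) ≤ (M D).toOuterMeasure {o | |o q - val D q| ≤ α}

/-- A dataset with time horizon `T` over universe `[U]`:
`S t u` is the multiplicity of item `u` at (0-indexed) time step `t`. -/
abbrev Dataset (T U : ℕ) : Type := Fin T → Fin U → ℕ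

/-- `S^{[t₁, t₂]}_u` with 1-indexed times: total multiplicity of item `u`
during time steps `t₁, ..., t₂`. -/
def winCount {T U : ℕ} (S : Dataset T U) (t₁ t₂ : ℕ) (u : Fin U) : ℕ :=
  ∑ t : Fin T, if t₁ ≤ (t : ℕ) + 1 ∧ (t : ℕ) + 1 ≤ t₂ then S t u else 0

/-- `freq≥k(S^{[t₁,t₂]})`: the number of items occurring at least `k` times. -/
def freqGe {T U : ℕ} (k : ℕ) (S : Dataset T U) (t₁ t₂ : ℕ) : ℕ :=
  (Finset.univ.filter fun u : Fin U => k ≤ winCount S t₁ t₂ u).card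

/-- `freq=k(S^{[t₁,t₂]})`: the number of items occurring exactly `k` times. -/
def freqEq {T U : ℕ} (k : ℕ) (S : Dataset T U) (t₁ t₂ : ℕ) : ℕ :=
  (Finset.univ.filter fun u : Fin U => winCount S t₁ t₂ u = k).card

/-- Item-level neighbors: the datasets agree on all items except possibly one. -/
def ItemNeighbor {T U : ℕ} (S S' : Dataset T U) : Prop :=
  ∃ u : Fin U, ∀ u' : Fin U, u' ≠ u → ∀ t : Fin T, S t u' = S' t u'

/-- Event-level neighbors: the total (absolute) difference of multiplicities is at most 1. -/
def EventNeighbor {T U : ℕ} (S S' : Dataset T U) : Prop :=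
  (∑ t : Fin T, ∑ u : Fin U, ((S t u : ℤ) - (S' t u : ℤ)).natAbs) ≤ 1

/-- Singleton setting: at most one item arrives at each time step. -/
def IsSingleton {T U : ℕ} (S : Dataset T U) : Prop :=
  ∀ t : Fin T, (∑ u : Fin U, S t u) ≤ 1

/-- Cumulative `freq≥k` queries: the query indexed by `t : Fin T` is
`freq≥k(S^{[1, t+1]})`. -/
def cumVal (k : ℕ) {T U : ℕ} (S : Dataset T U) (t : Fin T) : ℝ :=
  (freqGe k S 1 ((t : ℕ) + 1) : ℝ)

/-- Time-window `freq≥k` queries: the query indexed by a pair `t₁ ≤ t₂` (0-indexed)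
is `freq≥k(S^{[t₁+1, t₂+1]})`. -/
def twVal (k : ℕ) {T U : ℕ} (S : Dataset T U)
    (p : {p : Fin T × Fin T // p.1 ≤ p.2}) : ℝ :=
  (freqGe k S ((p.1.1 : ℕ) + 1) ((p.1.2 : ℕ) + 1) : ℝ)

/-- Time-window `freq=k` queries. -/
def twValEq (k : ℕ) {T U : ℕ} (S : Dataset T U)
    (p : {p : Fin T × Fin T // p.1 ≤ p.2}) : ℝ :=
  (freqEq k S ((p.1.1 : ℕ) + 1) ((p.1.2 : ℕ) + 1) : ℝ)

/-- Fixed-window `freq≥k` queries with window `W`: the query indexed by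
`i : Fin (T - W + 1)` is `freq≥k(S^{[i+1, i+W]})`. -/
def fwVal (k W : ℕ) {T U : ℕ} (S : Dataset T U) (i : Fin (T - W + 1)) : ℝ :=
  (freqGe k S ((i : ℕ) + 1) ((i : ℕ) + W) : ℝ)

/-- Neighboring inputs for range-query-type problems: they differ by adding
or removing a single point. -/
def AddRemoveNeighbor {P : Type} (D D' : Multiset P) : Prop :=
  ∃ x : P, D' = x ::ₘ D ∨ D = x ::ₘ D'

/-- 1d-range queries over a linearly ordered finite domain `Fin M`:
the query indexed by `y₁ ≤ y₂` counts the points in `[y₁, y₂]`. -/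
def range1Val {M : ℕ} (D : Multiset (Fin M))
    (p : {p : Fin M × Fin M // p.1 ≤ p.2}) : ℝ :=
  ((D.filter fun x => p.1.1 ≤ x ∧ x ≤ p.1.2).card : ℝ)

/-- 2d-range queries over the domain `Fin M × Fin M`: the query indexed by a pair
`(y¹, y²)` counts the points `x` with `y¹ ⪯ x ⪯ y²` coordinatewise. -/
def range2Val {M : ℕ} (D : Multiset (Fin M × Fin M))
    (p : (Fin M × Fin M) × (Fin M × Fin M)) : ℝ :=
  ((D.filter fun x =>
      p.1.1 ≤ x.1 ∧ p.1.2 ≤ x.2 ∧ x.1 ≤ p.2.1 ∧ x.2 ≤ p.2.2).card : ℝ)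

/-- Neighboring inputs for the linear query problem: they differ
in a single coordinate. -/
def CoordNeighbor {m : ℕ} (x x' : Fin m → Bool) : Prop :=
  ∃ u : Fin m, ∀ u' : Fin m, u' ≠ u → x u' = x' u'

/-- The `A`-linear queries: the query indexed by `i : Fin d` is `(A x)_i`. -/
def linVal {d m : ℕ} (A : Fin d → Fin m → Bool) (x : Fin m → Bool) (i : Fin d) : ℝ :=
  ((∑ u : Fin m, if A i u && x u then 1 else 0 : ℕ) : ℝ)

/-- The 1-way marginal queries: the query indexed by `i : Fin d` is the `i`-th
coordinate of the sum of the input vectors. -/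
def margVal {d : ℕ} (D : Multiset (Fin d → Bool)) (i : Fin d) : ℝ :=
  (((D.map fun x => if x i then (1 : ℕ) else 0).sum : ℕ) : ℝ)

open MeasureTheory Set
open scoped ENNReal

namespace PMF

variable {X Y : Type*}

theorem lintegral_toMeasure_eq_tsum [MeasurableSpace X] [DiscreteMeasurableSpace X]
    (p : PMF X) (f : X → ℝ≥0∞) : ∫⁻ x, f x ∂p.toMeasure = ∑' x, p x * f x := by
  have hp : p.toMeasure = Measure.sum fun x => p x • Measure.dirac x := by
    ext s hs
    rw [toMeasure_apply p hs, Measure.sum_apply _ hs]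
    refine tsum_congr fun x => ?_
    by_cases hx : x ∈ s <;> simp [Measure.dirac_apply' x hs, hx]
  rw [hp, lintegral_sum_measure]
  refine tsum_congr fun x => ?_
  rw [lintegral_smul_measure, lintegral_dirac' x (Measurable.of_discrete), smul_eq_mul]

theorem tsum_mul_le_of_toOuterMeasure_le {p q : PMF X} {c d : ℝ≥0∞}
    (h : ∀ s, p.toOuterMeasure s ≤ c * q.toOuterMeasure s + d)
    (f : X → ℝ≥0∞) (hf : ∀ x, f x ≤ 1) :
    ∑' x, p x * f x ≤ c * ∑' x, q x * f x + d := by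
  let _ : MeasurableSpace X := ⊤
  have layerCake : ∀ r : PMF X,
      ∑' x, r x * f x = ∫⁻ t in Ioi 0, r.toOuterMeasure {x | t < (f x).toReal} := by
    intro r
    have hf' : ∀ x, f x = ENNReal.ofReal (f x).toReal := fun x =>
      (ENNReal.ofReal_toReal (ne_top_of_le_ne_top ENNReal.one_ne_top (hf x))).symm
    rw [← lintegral_toMeasure_eq_tsum, lintegral_congr fun x => hf' x,
      lintegral_eq_lintegral_meas_lt _ (Filter.Eventually.of_forall fun _ => ENNReal.toReal_nonneg)
        Measurable.of_discrete.aemeasurable]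
    simp only [toMeasure_apply_eq_toOuterMeasure_apply _ (MeasurableSet.of_discrete)]
  have hmeas : Measurable fun t : ℝ => q.toOuterMeasure {x | t < (f x).toReal} :=
    Antitone.measurable fun t t' htt' => measure_mono fun x hx => htt'.trans_lt hx
  have hpoint : ∀ t ∈ Ioi (0 : ℝ), p.toOuterMeasure {x | t < (f x).toReal}
      ≤ c * q.toOuterMeasure {x | t < (f x).toReal} + (Set.Ioc 0 1).indicator (fun _ => d) t := by
    intro t ht
    by_cases ht1 : t ≤ 1
    · simpa [indicator_of_mem (show t ∈ Set.Ioc 0 1 from ⟨ht, ht1⟩)] using h _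
    · have hempty : {x | t < (f x).toReal} = ∅ := by
        ext x
        simp only [mem_ofPred_eq, mem_empty_iff_false, iff_false, not_lt]
        exact (ENNReal.toReal_le_of_le_ofReal zero_le_one (by simpa using hf x)).trans
          (not_le.mp ht1).le
      simp [hempty]
  calc ∑' x, p x * f x
      ≤ ∫⁻ t in Ioi 0, c * q.toOuterMeasure {x | t < (f x).toReal}
          + (Set.Ioc 0 1).indicator (fun _ => d) t := by
        rw [layerCake]
        exact setLIntegral_mono' measurableSet_Ioi hpoint
    _ = c * ∑' x, q x * f x + d := by
        rw [lintegral_add_right _ (measurable_const.indicator measurableSet_Ioc),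
          lintegral_const_mul _ hmeas, layerCake, lintegral_indicator_const measurableSet_Ioc,
          Measure.restrict_apply measurableSet_Ioc, Ioc_inter_Ioi, max_self, Real.volume_Ioc]
        simp

theorem toOuterMeasure_apply_le_one (p : PMF X) (s : Set X) : p.toOuterMeasure s ≤ 1 :=
  (p.toOuterMeasure.mono (subset_univ s)).trans
    ((toOuterMeasure_apply_eq_one_iff p univ).mpr (subset_univ _)).le

theorem toOuterMeasure_bind_le {p q : PMF X} {P Q : X → PMF Y} {c d c' d' : ℝ≥0∞}
    (hpq : ∀ s, p.toOuterMeasure s ≤ c * q.toOuterMeasure s + d)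
    (hPQ : ∀ x s, (P x).toOuterMeasure s ≤ c' * (Q x).toOuterMeasure s + d')
    (s : Set Y) :
    (p.bind P).toOuterMeasure s ≤ c * c' * (q.bind Q).toOuterMeasure s + (d + d') := by
  simp only [toOuterMeasure_bind_apply]
  set g := fun x => (P x).toOuterMeasure s
  set h := fun x => (Q x).toOuterMeasure s
  -- The `min` keeps the integrand `[0, 1]`-valued, so the first-stage bound applies to it.
  have hg : ∀ x, g x ≤ min (g x) (c' * h x) + d' := fun x => by
    rw [← min_add_add_right]
    exact le_min le_self_add (hPQ x s)
  calc ∑' x, p x * g x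
      ≤ ∑' x, p x * (min (g x) (c' * h x) + d') :=
        ENNReal.tsum_le_tsum fun x => mul_le_mul_right (hg x) _
    _ = ∑' x, p x * min (g x) (c' * h x) + d' := by
        simp only [mul_add]
        rw [ENNReal.tsum_add, ENNReal.tsum_mul_right, tsum_coe, one_mul]
    _ ≤ c * ∑' x, q x * min (g x) (c' * h x) + d + d' := by
        gcongr
        exact tsum_mul_le_of_toOuterMeasure_le hpq _
          fun x => (min_le_left _ _).trans (toOuterMeasure_apply_le_one _ _)
    _ ≤ c * ∑' x, q x * (c' * h x) + d + d' := by
        gcongr with x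
        exact min_le_right _ _
    _ = c * c' * ∑' x, q x * h x + (d + d') := by
        simp only [mul_left_comm (q _) c', ENNReal.tsum_mul_left]
        ring

noncomputable def pi : {m : ℕ} → (Fin m → PMF X) → PMF (Fin m → X)
  | 0, _ => pure finZeroElim
  | _ + 1, p => (p 0).bind fun x => (pi fun j => p j.succ).map (Fin.cons x)

theorem toOuterMeasure_pi_le {c d : ℝ≥0∞} : ∀ {m : ℕ} {p q : Fin m → PMF X},
    (∀ j s, (p j).toOuterMeasure s ≤ c * (q j).toOuterMeasure s + d) →
    ∀ s, (pi p).toOuterMeasure s ≤ c ^ m * (pi q).toOuterMeasure s + m * d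
  | 0, p, q, _, s => by simp [pi]
  | m + 1, p, q, h, s => by
    have htail := toOuterMeasure_pi_le (p := fun j => p j.succ) (q := fun j => q j.succ)
      fun j => h j.succ
    calc (pi p).toOuterMeasure s
        ≤ c * c ^ m * (pi q).toOuterMeasure s + (d + m * d) :=
          toOuterMeasure_bind_le (h 0) (fun x t => by
            simpa only [toOuterMeasure_map_apply] using htail _) s
      _ = c ^ (m + 1) * (pi q).toOuterMeasure s + ↑(m + 1) * d := by
          push_cast
          ring

theorem map_eval_pi : ∀ {m : ℕ} (p : Fin m → PMF X) (j : Fin m), (pi p).map (· j) = p j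
  | m + 1, p, j => by
    simp only [pi, map_bind, map_comp]
    refine Fin.cases ?_ (fun j => ?_) j
    · simp only [Function.comp_def, Fin.cons_zero]
      exact (congrArg _ (funext fun x => map_const _ x)).trans (bind_pure _)
    · simp only [Function.comp_def, Fin.cons_succ, map_eval_pi (fun j => p j.succ) j, bind_const]

end PMF

section DifferentialPrivacy

variable {I O O' : Type} {R : I → I → Prop} {M : I → PMF O} {ε δ : ℝ}

theorem IsDP.mono (hM : IsDP R M ε δ) {ε' δ' : ℝ} (hε : ε ≤ ε') (hδ : δ ≤ δ') :
    IsDP R M ε' δ' := fun D D' hD s =>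
  (hM D D' hD s).trans <| add_le_add
    (mul_le_mul_left (ENNReal.ofReal_le_ofReal (Real.exp_le_exp.mpr hε)) _)
    (ENNReal.ofReal_le_ofReal hδ)

theorem IsDP.map (hM : IsDP R M ε δ) (f : O → O') : IsDP R (fun D => (M D).map f) ε δ :=
  fun D D' hD s => by simpa only [PMF.toOuterMeasure_map_apply] using hM D D' hD (f ⁻¹' s)

theorem IsDP.pi {m : ℕ} {A : Fin m → I → PMF O} (hA : ∀ j, IsDP R (A j) ε δ) :
    IsDP R (fun D => PMF.pi fun j => A j D) (m * ε) (m * δ) := fun D D' hD s => by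
  rw [Real.exp_nat_mul, ENNReal.ofReal_pow (Real.exp_nonneg ε),
    ENNReal.ofReal_mul (Nat.cast_nonneg m), ENNReal.ofReal_natCast]
  exact PMF.toOuterMeasure_pi_le (fun j => hA j D D' hD) s

end DifferentialPrivacy

section Slices

variable {T U L : ℕ}

def multAt (D : Dataset T U) (u : Fin U) (n : ℕ) : ℕ :=
  if h : n < T then D ⟨n, h⟩ u else 0

theorem winCount_eq_sum_Ico (D : Dataset T U) {a b : ℕ} (hb : b ≤ T) (u : Fin U) :
    winCount D a b u = ∑ n ∈ Finset.Ico (a - 1) b, multAt D u n := by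
  have hD : ∀ t : Fin T, D t u = multAt D u t := fun t => by simp [multAt]
  simp only [winCount, hD]
  rw [Fin.sum_univ_eq_sum_range (fun n => if a ≤ n + 1 ∧ n + 1 ≤ b then multAt D u n else 0),
    ← Finset.sum_filter]
  congr 1
  ext n
  simp only [Finset.mem_filter, Finset.mem_range, Finset.mem_Ico]
  omega

def timeSlice (L s : ℕ) (D : Dataset T U) : Dataset L U := fun t u => multAt D u (s + t)

theorem multAt_timeSlice (D : Dataset T U) (s : ℕ) {n : ℕ} (hn : n < L) (u : Fin U) :
    multAt (timeSlice L s D) u n = multAt D u (s + n) := by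
  simp [multAt, timeSlice, hn]

theorem winCount_timeSlice (D : Dataset T U) (s : ℕ) {a b : ℕ} (ha : 1 ≤ a) (hbL : b ≤ L)
    (hbT : s + b ≤ T) (u : Fin U) :
    winCount (timeSlice L s D) a b u = winCount D (s + a) (s + b) u := by
  rw [winCount_eq_sum_Ico _ hbL, winCount_eq_sum_Ico _ hbT,
    Finset.sum_congr rfl fun n hn => multAt_timeSlice D s (by simp at hn; omega) u,
    Finset.sum_Ico_add (multAt D u) (a - 1) b s]
  congr 2 <;> omega

theorem ItemNeighbor.timeSlice {D D' : Dataset T U} (h : ItemNeighbor D D') (s : ℕ) :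
    ItemNeighbor (timeSlice L s D) (timeSlice L s D') := by
  obtain ⟨u, hu⟩ := h
  refine ⟨u, fun u' hu' t => ?_⟩
  show multAt D u' (s + t) = multAt D' u' (s + t)
  unfold multAt
  split_ifs
  exacts [hu u' hu' _, rfl]

theorem fwVal_timeSlice (k W : ℕ) (D : Dataset T U) (hWL : W ≤ L) (hWT : W ≤ T) (s : ℕ)
    {r : Fin (L - W + 1)} {i : Fin (T - W + 1)} (h : s + r = i) :
    fwVal k W (timeSlice L s D) r = fwVal k W D i := by
  have hr := r.isLt
  have hi := i.isLt
  have hcount : ∀ u, winCount (timeSlice L s D) (r + 1) (r + W) u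
      = winCount D (i + 1) (i + W) u := fun u => by
    rw [winCount_timeSlice D s (by omega) (by omega) (by omega), ← h, add_assoc, add_assoc]
  simp only [fwVal, freqGe, hcount]

end Slices

section Blocks

variable {W T : ℕ}

def blockOf (i : Fin (T - W + 1)) : Fin ((T - W) / W + 1) :=
  ⟨i / W, Nat.lt_succ_of_le (Nat.div_le_div_right (Nat.lt_succ_iff.mp i.isLt))⟩

def offsetOf (hW : 0 < W) (i : Fin (T - W + 1)) : Fin (2 * W - W + 1) :=
  ⟨i % W, by have := Nat.mod_lt i hW; omega⟩

theorem blockOf_mul_add_offsetOf (hW : 0 < W) (i : Fin (T - W + 1)) :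
    (blockOf i : ℕ) * W + offsetOf hW i = i :=
  Nat.div_add_mod' i W

theorem numBlocks_mul_le (hWT : W ≤ T) : ((T - W) / W + 1) * W ≤ T := by
  have := Nat.div_mul_le_self (T - W) W
  rw [add_mul, one_mul]
  omega

end Blocks

theorem natCast_mul_mul_div_le {m W T : ℕ} {x : ℝ} (hx : 0 ≤ x) (h : m * W ≤ T) :
    (m : ℝ) * (x * W / (2 * T)) ≤ x := by
  rcases T.eq_zero_or_pos with rfl | hT
  · simp [hx]
  have hmW : (m : ℝ) * W ≤ T := by exact_mod_cast h
  rw [show (m : ℝ) * (x * W / (2 * T)) = x * (m * W) / (2 * T) by ring,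
    div_le_iff₀ (by positivity)]
  nlinarith [mul_le_mul_of_nonneg_left hmW hx]

theorem fixed_window_horizon_reduction_item_general (k W T U : ℕ)
    (hW : 0 < W) (hWT : W ≤ T)
    (ε δ α β : ℝ) (hε : 0 ≤ ε) (hδ : 0 ≤ δ)
    (h : ∃ M₁ : Dataset (2 * W) U → PMF (Fin (2 * W - W + 1) → ℝ),
      IsDP ItemNeighbor M₁ (ε * (W : ℝ) / (2 * (T : ℝ))) (δ * (W : ℝ) / (2 * (T : ℝ))) ∧
      HasUtility M₁ (fwVal k W) α β) :
    ∃ M₂ : Dataset T U → PMF (Fin (T - W + 1) → ℝ),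
      IsDP ItemNeighbor M₂ ε δ ∧ HasUtility M₂ (fwVal k W) α β := by
  obtain ⟨M₁, hDP₁, hU₁⟩ := h
  let blockRun (D : Dataset T U) (j : Fin ((T - W) / W + 1)) :=
    M₁ (timeSlice (2 * W) (j * W) D)
  refine ⟨fun D => (PMF.pi (blockRun D)).map fun F i => F (blockOf i) (offsetOf hW i), ?_, ?_⟩
  · have hm := numBlocks_mul_le hWT
    exact ((IsDP.pi fun j D D' hD => hDP₁ _ _ (hD.timeSlice _)).map _).mono
      (natCast_mul_mul_div_le hε hm) (natCast_mul_mul_div_le hδ hm)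
  · intro D i
    have hval := fwVal_timeSlice k W D (by omega) hWT _ (blockOf_mul_add_offsetOf hW i)
    calc ENNReal.ofReal (1 - β)
        ≤ (blockRun D (blockOf i)).toOuterMeasure
            {x | |x (offsetOf hW i) - fwVal k W D i| ≤ α} := hval ▸ hU₁ _ _
      _ = _ := by
        rw [← PMF.map_eval_pi (blockRun D), PMF.toOuterMeasure_map_apply,
          PMF.toOuterMeasure_map_apply]
        rfl

/-- time-horizon reduction for fixed-window `freq≥k` under
item-level DP in the bundle setting: an `(εW/(2T), δW/(2T))`-DP algorithm for
horizon `2W` yields an `(ε, δ)`-DP algorithm for horizon `T`. -/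
theorem fixed_window_horizon_reduction_item (k W T U : ℕ)
    (hk : 0 < k) (hW : 0 < W) (hWT : W ≤ T) (hU : 0 < U)
    (ε δ α β : ℝ) (hε : 0 ≤ ε) (hδ : 0 ≤ δ) (hα : 0 ≤ α) (hβ0 : 0 ≤ β) (hβ1 : β ≤ 1)
    (h : ∃ M₁ : Dataset (2 * W) U → PMF (Fin (2 * W - W + 1) → ℝ),
      IsDP ItemNeighbor M₁ (ε * (W : ℝ) / (2 * (T : ℝ))) (δ * (W : ℝ) / (2 * (T : ℝ))) ∧
      HasUtility M₁ (fwVal k W) α β) :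
    ∃ M₂ : Dataset T U → PMF (Fin (T - W + 1) → ℝ),
      IsDP ItemNeighbor M₂ ε δ ∧ HasUtility M₂ (fwVal k W) α β :=
  fixed_window_horizon_reduction_item_general k W T U hW hWT ε δ α β hε hδ h
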